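/- Let n ≥ 5 and let f be a group homomorphism from the braid group B_n to a group G such that f(σ_1) = f(σ_3). Then the image of f equals the cyclic subgroup of G generated by f(σ_1); in particular the image of f is cyclic. -/

import Mathlib

/-- The braid relations on `m` generators indexed by `Fin m`
(generator `i` represents the standard generator `σ_{i+1}`). -/
def braidRels (m : ℕ) : Set (FreeGroup (Fin m)) :=
  {r | (∃ i j : Fin m, (i : ℕ) + 2 ≤ (j : ℕ) ∧
        r = FreeGroup.of i * FreeGroup.of j * (FreeGroup.of i)⁻¹ * (FreeGroup.of j)⁻¹) ∨
       (∃ i j : Fin m, (j : ℕ) = (i : ℕ) + 1 ∧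
        r = FreeGroup.of i * FreeGroup.of j * FreeGroup.of i *
            (FreeGroup.of j * FreeGroup.of i * FreeGroup.of j)⁻¹)}

/-- The braid group on `n` strands, presented with `n - 1` generators. -/
def BraidGroup (n : ℕ) : Type := PresentedGroup (braidRels (n - 1))

instance (n : ℕ) : Group (BraidGroup n) :=
  inferInstanceAs (Group (PresentedGroup (braidRels (n - 1))))

/-- The standard generator `σ_{i+1}` of the braid group `B_n`. -/
def braidGen {n : ℕ} (i : Fin (n - 1)) : BraidGroup n := PresentedGroup.of i

/-- A subset of a group is totally symmetric if its elements pairwise commute and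
every permutation of the set is realized by conjugation by some group element. -/
def IsTotallySymmetric {G : Type*} [Group G] (S : Set G) : Prop :=
  (∀ a ∈ S, ∀ b ∈ S, a * b = b * a) ∧
  ∀ π : S ≃ S, ∃ h : G, ∀ s : S, h * (s : G) * h⁻¹ = ((π s : S) : G)

lemma braidRels_mk_eq_one {m : ℕ} {r : FreeGroup (Fin m)} (hr : r ∈ braidRels m) :
    PresentedGroup.mk (braidRels m) r = 1 := by
  have : r ∈ Subgroup.normalClosure (braidRels m) := Subgroup.subset_normalClosure hr
  exact (QuotientGroup.eq_one_iff r).mpr this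

lemma braidGen_comm {n : ℕ} {i j : Fin (n - 1)} (hij : (i : ℕ) + 2 ≤ (j : ℕ)) :
    braidGen (n := n) i * braidGen j = braidGen j * braidGen i := by
  have h1 : PresentedGroup.mk (braidRels (n - 1))
      (FreeGroup.of i * FreeGroup.of j * (FreeGroup.of i)⁻¹ * (FreeGroup.of j)⁻¹) = 1 :=
    braidRels_mk_eq_one (Or.inl ⟨i, j, hij, rfl⟩)
  have h2 : braidGen (n := n) i * braidGen j * (braidGen i)⁻¹ * (braidGen j)⁻¹ = 1 := by
    simp only [map_mul, map_inv] at h1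
    exact h1
  rwa [mul_inv_eq_one, mul_inv_eq_iff_eq_mul] at h2

lemma braidGen_braid {n : ℕ} {i j : Fin (n - 1)} (hij : (j : ℕ) = (i : ℕ) + 1) :
    braidGen (n := n) i * braidGen j * braidGen i = braidGen j * braidGen i * braidGen j := by
  have h1 : PresentedGroup.mk (braidRels (n - 1))
      (FreeGroup.of i * FreeGroup.of j * FreeGroup.of i *
        (FreeGroup.of j * FreeGroup.of i * FreeGroup.of j)⁻¹) = 1 :=
    braidRels_mk_eq_one (Or.inr ⟨i, j, hij, rfl⟩)
  have h2 : braidGen (n := n) i * braidGen j * braidGen i *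
      (braidGen j * braidGen i * braidGen j)⁻¹ = 1 := by
    simp only [map_mul, map_inv] at h1
    exact h1
  rwa [mul_inv_eq_one] at h2

lemma eq_of_comm_of_braid {G : Type*} [Group G] {x y : G}
    (hc : x * y = y * x) (hb : x * y * x = y * x * y) : x = y := by
  have key : x * (x * y) = x * (y * y) := by
    calc x * (x * y) = x * (y * x) := by rw [hc]
      _ = x * y * x := by rw [mul_assoc]
      _ = y * x * y := hb
      _ = x * y * y := by rw [hc]
      _ = x * (y * y) := by rw [mul_assoc]
  have := mul_left_cancel key
  exact mul_right_cancel this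

/-- For `n ≥ 5`, a homomorphism from the braid group `B_n` identifying `σ₁` and `σ₃` has image
the cyclic subgroup generated by the image of `σ₁`. -/
theorem range_eq_zpowers_of_sigma1_eq_sigma3
    (n : ℕ) (hn : 5 ≤ n) {G : Type*} [Group G] (f : BraidGroup n →* G)
    (h : f (braidGen ⟨0, by omega⟩) = f (braidGen ⟨2, by omega⟩)) :
    f.range = Subgroup.zpowers (f (braidGen ⟨0, by omega⟩)) := by
  set a := f (braidGen (n := n) ⟨0, by omega⟩) with ha
  -- f(σ₄) = a
  have h4 : f (braidGen (n := n) ⟨3, by omega⟩) = a := by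
    have hc : a * f (braidGen (n := n) ⟨3, by omega⟩)
        = f (braidGen (n := n) ⟨3, by omega⟩) * a := by
      rw [ha, ← map_mul, ← map_mul, braidGen_comm (by simp)]
    have hb : a * f (braidGen (n := n) ⟨3, by omega⟩) * a
        = f (braidGen (n := n) ⟨3, by omega⟩) * a * f (braidGen (n := n) ⟨3, by omega⟩) := by
      rw [h, ← map_mul, ← map_mul, ← map_mul, ← map_mul,
        braidGen_braid (i := ⟨2, by omega⟩) (j := ⟨3, by omega⟩) (by simp)]
    exact (eq_of_comm_of_braid hc hb).symm
  -- f(σ₂) = a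
  have h2 : f (braidGen (n := n) ⟨1, by omega⟩) = a := by
    have hc : a * f (braidGen (n := n) ⟨1, by omega⟩)
        = f (braidGen (n := n) ⟨1, by omega⟩) * a := by
      rw [← h4, ← map_mul, ← map_mul,
        braidGen_comm (i := ⟨1, by omega⟩) (j := ⟨3, by omega⟩) (by simp)]
    have hb : a * f (braidGen (n := n) ⟨1, by omega⟩) * a
        = f (braidGen (n := n) ⟨1, by omega⟩) * a * f (braidGen (n := n) ⟨1, by omega⟩) := by
      rw [ha, ← map_mul, ← map_mul, ← map_mul, ← map_mul,
        braidGen_braid (i := ⟨0, by omega⟩) (j := ⟨1, by omega⟩) (by simp)]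
    exact (eq_of_comm_of_braid hc hb).symm
  -- all generators map to a, by strong induction
  have key : ∀ k : ℕ, ∀ hk : k < n - 1, f (braidGen (n := n) ⟨k, hk⟩) = a := by
    intro k
    induction k using Nat.strong_induction_on with
    | _ k ih =>
      intro hk
      match k with
      | 0 => rfl
      | 1 => exact h2
      | 2 => exact h.symm
      | 3 => exact h4
      | (m + 4) =>
        have hm1 : m + 3 < n - 1 := by omega
        have hm2 : m + 2 < n - 1 := by omega
        have e1 : f (braidGen (n := n) ⟨m + 3, hm1⟩) = a := ih (m + 3) (by omega) hm1
        have e2 : f (braidGen (n := n) ⟨m + 2, hm2⟩) = a := ih (m + 2) (by omega) hm2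
        have hc : a * f (braidGen (n := n) ⟨m + 4, hk⟩)
            = f (braidGen (n := n) ⟨m + 4, hk⟩) * a := by
          rw [← e2, ← map_mul, ← map_mul,
            braidGen_comm (i := ⟨m + 2, hm2⟩) (j := ⟨m + 4, hk⟩) (by simp)]
        have hb : a * f (braidGen (n := n) ⟨m + 4, hk⟩) * a
            = f (braidGen (n := n) ⟨m + 4, hk⟩) * a
              * f (braidGen (n := n) ⟨m + 4, hk⟩) := by
          rw [← e1, ← map_mul, ← map_mul, ← map_mul, ← map_mul,
            braidGen_braid (i := ⟨m + 3, hm1⟩) (j := ⟨m + 4, hk⟩) (by simp)]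
        exact (eq_of_comm_of_braid hc hb).symm
  have hall : ∀ i : Fin (n - 1), f (braidGen (n := n) i) = a := fun ⟨k, hk⟩ => key k hk
  -- compute the range
  apply le_antisymm
  · rintro x ⟨y, rfl⟩
    have : y ∈ (⊤ : Subgroup (BraidGroup n)) := trivial
    rw [← show Subgroup.closure (G := BraidGroup n) (Set.range (α := BraidGroup n) PresentedGroup.of) = ⊤
      from PresentedGroup.closure_range_of (braidRels (n - 1))] at this
    refine Subgroup.closure_induction ?_ ?_ ?_ ?_ this
    · rintro z ⟨i, rfl⟩
      rw [show (PresentedGroup.of i : BraidGroup n) = braidGen i from rfl, hall i]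
      exact Subgroup.mem_zpowers a
    · rw [map_one]; exact one_mem _
    · intro u v _ _ hu hv
      rw [map_mul]; exact mul_mem hu hv
    · intro u _ hu
      rw [map_inv]; exact inv_mem hu
  · rw [Subgroup.zpowers_le]
    exact ⟨_, rfl⟩
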